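/- arXiv:1005.5170 — 2 statements merged into one kernel-verified Lean document; each statement's English description precedes it below -/
import Mathlib

section
/- Second-order Wirtinger–Taylor expansion: let f : ℂ → ℂ with f = u + iv, where u and v, viewed as functions on ℝ², are twice differentiable at c = c₁ + i c₂ (so they admit second-order Taylor expansions with Hessians H_u, H_v). Then f(c+h) = f(c) + ∂f/∂z(c)·h + ∂f/∂z*(c)·h̄ + ½·( ∂²f/∂z²(c)·h² + ∂²f/∂z∂z*(c)·h·h̄ + ∂²f/∂z*∂z(c)·h̄·h + ∂²f/∂z*²(c)·h̄² ) + o(|h|²) as h → 0, where the second-order Wirtinger derivatives are obtained by iterating the Wirtinger operators: ∂²f/∂z² = ∂/∂z(∂f/∂z), ∂²f/∂z∂z* = ∂/∂z(∂f/∂z*), ∂²f/∂z*∂z = ∂/∂z*(∂f/∂z), ∂²f/∂z*² = ∂/∂z*(∂f/∂z*). -/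
open Complex Filter Asymptotics Topology

/-- The Wirtinger derivative `∂f/∂z (c) = ½ (∂f/∂x (c) - i ∂f/∂y (c))`. -/
noncomputable def wderiv (f : ℂ → ℂ) (c : ℂ) : ℂ :=
  (1 / 2 : ℂ) * (fderiv ℝ f c 1 - Complex.I * fderiv ℝ f c Complex.I)

/-- The conjugate Wirtinger derivative `∂f/∂z* (c) = ½ (∂f/∂x (c) + i ∂f/∂y (c))`. -/
noncomputable def cwderiv (f : ℂ → ℂ) (c : ℂ) : ℂ :=
  (1 / 2 : ℂ) * (fderiv ℝ f c 1 + Complex.I * fderiv ℝ f c Complex.I)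

/-! Over `ℝ` the remainder `g y = f y - f' (y - c) - ½ f'' (y - c) (y - c)` has derivative
`f' y - f' c - f'' (y - c)` (using the symmetry of `f''`), which is `o(‖y - c‖)`; the mean value
inequality then makes `g` itself `o(‖y - c‖²)`. What remains is algebra: a real-linear
`T : ℂ → ℂ` satisfies `T h = ½ (T 1 - i T i) h + ½ (T 1 + i T i) h̄`, which applied to `f'`
gives the first-order Wirtinger terms and applied to `f''` (together with the fact that the
Wirtinger operators commute with differentiation in `c`) the second-order ones. -/

open ComplexConjugate

section Taylor

variable {E F : Type*} [NormedAddCommGroup E] [NormedSpace ℝ E] [NormedAddCommGroup F]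
  [NormedSpace ℝ F] {f : E → F} {x : E}

theorem taylor_isLittleO_two (hf : ∀ᶠ y in 𝓝 x, DifferentiableAt ℝ f y)
    (hf' : DifferentiableAt ℝ (fderiv ℝ f) x) :
    (fun h => f (x + h) - f x - fderiv ℝ f x h - (1 / 2 : ℝ) • fderiv ℝ (fderiv ℝ f) x h h)
      =o[𝓝 0] fun h => ‖h‖ ^ 2 := by
  set A := fderiv ℝ f x
  set B := fderiv ℝ (fderiv ℝ f) x
  have hB : HasFDerivAt (fderiv ℝ f) B x := hf'.hasFDerivAt
  have hsymm : ∀ v w, B v w = B w v :=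
    second_derivative_symmetric_of_eventually (hf.mono fun y hy => hy.hasFDerivAt) hB
  obtain ⟨r, hr, hball⟩ := Metric.eventually_nhds_iff_ball.1 hf
  have hnhds : 𝓝[Metric.ball x r] x = 𝓝 x := nhdsWithin_eq_nhds.2 (Metric.ball_mem_nhds x hr)
  set g : E → F := fun y => f y - A (y - x) - (1 / 2 : ℝ) • B (y - x) (y - x)
  have hg : ∀ y ∈ Metric.ball x r,
      HasFDerivWithinAt g (fderiv ℝ f y - A - B (y - x)) (Metric.ball x r) y := by
    intro y hy
    have hlin : HasFDerivAt (fun y => y - x) (ContinuousLinearMap.id ℝ E) y :=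
      (hasFDerivAt_id y).sub_const x
    refine (((hball y hy).hasFDerivAt.sub (A.hasFDerivAt.comp y hlin)).sub
      ((B.hasFDerivAt_of_bilinear hlin hlin).const_smul (1 / 2 : ℝ))).hasFDerivWithinAt
      |>.congr_fderiv ?_
    ext v
    simp [hsymm v]
    module
  have hg' : (fun y => fderiv ℝ f y - A - B (y - x)) =o[𝓝[Metric.ball x r] x]
      fun y => ‖y - x‖ ^ 1 := by
    simpa [hnhds] using hB.isLittleO.norm_right
  have hgo := (convex_ball x r).isLittleO_pow_succ (Metric.mem_ball_self hr) hg hg'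
  rw [hnhds] at hgo
  have hshift : Tendsto (fun h => x + h) (𝓝 0) (𝓝 x) := by
    simpa using (continuous_const_add x).tendsto 0
  convert hgo.comp_tendsto hshift using 1
  · funext h
    simp [g]
    module
  · funext h
    simp

end Taylor

theorem ContinuousLinearMap.complex_apply_eq_mul_add_mul_conj (T : ℂ →L[ℝ] ℂ) (h : ℂ) :
    T h = (1 / 2 : ℂ) * (T 1 - I * T I) * h + (1 / 2 : ℂ) * (T 1 + I * T I) * conj h := by
  have hT : T h = h.re * T 1 + h.im * T I := by
    calc T h = T (h.re • 1 + h.im • I) := by simp [real_smul]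
      _ = h.re • T 1 + h.im • T I := by rw [map_add, map_smul, map_smul]
      _ = h.re * T 1 + h.im * T I := by simp only [real_smul]
  have hconj : conj h = h.re - h.im * I := by simp [Complex.ext_iff]
  rw [hT, hconj]
  nth_rw 3 [← re_add_im h]
  linear_combination (h.im * T I) * I_sq

theorem fderiv_apply_eq_wderiv_add_cwderiv (f : ℂ → ℂ) (c h : ℂ) :
    fderiv ℝ f c h = wderiv f c * h + cwderiv f c * conj h :=
  (fderiv ℝ f c).complex_apply_eq_mul_add_mul_conj h

section SecondOrder

variable {f : ℂ → ℂ} {c : ℂ}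

theorem fderiv_wderiv_apply (hf : DifferentiableAt ℝ (fderiv ℝ f) c) (k : ℂ) :
    fderiv ℝ (wderiv f) c k
      = (1 / 2 : ℂ) * (fderiv ℝ (fderiv ℝ f) c k 1 - I * fderiv ℝ (fderiv ℝ f) c k I) := by
  have h1 := (ContinuousLinearMap.apply ℝ ℂ (1 : ℂ)).hasFDerivAt.comp c hf.hasFDerivAt
  have hI := (ContinuousLinearMap.apply ℝ ℂ I).hasFDerivAt.comp c hf.hasFDerivAt
  have hw : HasFDerivAt (wderiv f) _ c := (h1.sub (hI.const_mul I)).const_mul (1 / 2 : ℂ)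
  simp [hw.fderiv]

theorem fderiv_cwderiv_apply (hf : DifferentiableAt ℝ (fderiv ℝ f) c) (k : ℂ) :
    fderiv ℝ (cwderiv f) c k
      = (1 / 2 : ℂ) * (fderiv ℝ (fderiv ℝ f) c k 1 + I * fderiv ℝ (fderiv ℝ f) c k I) := by
  have h1 := (ContinuousLinearMap.apply ℝ ℂ (1 : ℂ)).hasFDerivAt.comp c hf.hasFDerivAt
  have hI := (ContinuousLinearMap.apply ℝ ℂ I).hasFDerivAt.comp c hf.hasFDerivAt
  have hw : HasFDerivAt (cwderiv f) _ c := (h1.add (hI.const_mul I)).const_mul (1 / 2 : ℂ)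
  simp [hw.fderiv, mul_add]

theorem fderiv_fderiv_apply_eq_wirtinger (hf : DifferentiableAt ℝ (fderiv ℝ f) c) (h : ℂ) :
    fderiv ℝ (fderiv ℝ f) c h h
      = wderiv (wderiv f) c * h ^ 2 + wderiv (cwderiv f) c * (h * conj h)
        + cwderiv (wderiv f) c * (conj h * h) + cwderiv (cwderiv f) c * conj h ^ 2 := by
  rw [(fderiv ℝ (fderiv ℝ f) c h).complex_apply_eq_mul_add_mul_conj h, ← fderiv_wderiv_apply hf,
    ← fderiv_cwderiv_apply hf, fderiv_apply_eq_wderiv_add_cwderiv (wderiv f),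
    fderiv_apply_eq_wderiv_add_cwderiv (cwderiv f)]
  ring

end SecondOrder

/-- **Second-order Wirtinger–Taylor expansion.** If `f : ℂ → ℂ` is twice differentiable in
the real sense at `c` (it is differentiable over `ℝ` in a neighborhood of `c` and its real
Fréchet derivative is differentiable at `c`), then
`f (c+h) = f c + ∂f/∂z (c) h + ∂f/∂z* (c) h* + ½ (∂²f/∂z² (c) h² + ∂²f/∂z∂z* (c) h h*
  + ∂²f/∂z*∂z (c) h* h + ∂²f/∂z*² (c) (h*)²) + o(|h|²)` as `h → 0`, where the second-order
Wirtinger derivatives are obtained by iterating the Wirtinger operators. -/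
theorem wirtinger_taylor_second_order (f : ℂ → ℂ) (c : ℂ)
    (hf : ∀ᶠ z in 𝓝 c, DifferentiableAt ℝ f z)
    (hf' : DifferentiableAt ℝ (fun z => fderiv ℝ f z) c) :
    (fun h : ℂ =>
        f (c + h) - f c - wderiv f c * h - cwderiv f c * (starRingEnd ℂ) h
          - (1 / 2 : ℂ) *
            (wderiv (fun z => wderiv f z) c * h ^ 2
              + wderiv (fun z => cwderiv f z) c * (h * (starRingEnd ℂ) h)
              + cwderiv (fun z => wderiv f z) c * ((starRingEnd ℂ) h * h)
              + cwderiv (fun z => cwderiv f z) c * ((starRingEnd ℂ) h) ^ 2))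
      =o[𝓝 (0 : ℂ)] fun h : ℂ => ‖h‖ ^ 2 := by
  refine (taylor_isLittleO_two hf hf').congr_left fun h => ?_
  rw [fderiv_apply_eq_wderiv_add_cwderiv, fderiv_fderiv_apply_eq_wirtinger hf', real_smul]
  push_cast
  ring
end

section
/- Fréchet Cauchy–Riemann conditions (necessity): let 𝓗 be a real Hilbert space and T : 𝓗 × 𝓗 → ℂ with T = T₁ + i T₂, where T₁, T₂ are real valued. Suppose T is Fréchet complex differentiable at c = (c₁,c₂), i.e. there exists w ∈ 𝓗 × 𝓗 with (T(c+h) − T(c) − ⟨h, w⟩_ℍ)/‖h‖_ℍ → 0 as h → 0. Then T₁ and T₂ are Fréchet differentiable at c with partial gradients satisfying ∇₁T₁(c) = ∇₂T₂(c) and ∇₂T₁(c) = −∇₁T₂(c). -/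
/-!
Since `hnorm` is at most `√2` times the product norm, complex Fréchet differentiability with
gradient `w` implies that `h ↦ ⟨h, w⟩_ℍ` is the real Fréchet derivative of `T` at `c`.
Its real and imaginary parts are `⟨h₁, w₁⟩ + ⟨h₂, w₂⟩` and `⟨h₁, -w₂⟩ + ⟨h₂, w₁⟩`, so the
gradients of `T₁` and `T₂` are `(w₁, w₂)` and `(-w₂, w₁)`.
-/

open Complex Filter Asymptotics Topology

variable {𝓗 : Type*} [NormedAddCommGroup 𝓗] [InnerProductSpace ℝ 𝓗]

/-- The complex inner product on `ℍ = 𝓗 × 𝓗` (elements `(u, v)` representing `u + iv`):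
`⟨f, g⟩_ℍ = ⟨u_f,u_g⟩ + ⟨v_f,v_g⟩ + i (⟨v_f,u_g⟩ - ⟨u_f,v_g⟩)`. -/
noncomputable def cinner (f g : 𝓗 × 𝓗) : ℂ :=
  ((inner ℝ f.1 g.1 + inner ℝ f.2 g.2 : ℝ) : ℂ)
    + ((inner ℝ f.2 g.1 - inner ℝ f.1 g.2 : ℝ) : ℂ) * Complex.I

/-- The norm on `ℍ = 𝓗 × 𝓗`: `‖(h₁, h₂)‖_ℍ = √(‖h₁‖² + ‖h₂‖²)`. -/
noncomputable def hnorm (h : 𝓗 × 𝓗) : ℝ :=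
  Real.sqrt (‖h.1‖ ^ 2 + ‖h.2‖ ^ 2)

@[simp]
lemma re_cinner (f g : 𝓗 × 𝓗) : (cinner f g).re = inner ℝ f.1 g.1 + inner ℝ f.2 g.2 := by
  simp [cinner]

@[simp]
lemma im_cinner (f g : 𝓗 × 𝓗) : (cinner f g).im = inner ℝ f.2 g.1 - inner ℝ f.1 g.2 := by
  simp [cinner]

noncomputable def cinnerCLM (w : 𝓗 × 𝓗) : (𝓗 × 𝓗) →L[ℝ] ℂ :=
  Complex.ofRealCLM.comp
      ((innerSL ℝ w.1).comp (ContinuousLinearMap.fst ℝ 𝓗 𝓗)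
        + (innerSL ℝ w.2).comp (ContinuousLinearMap.snd ℝ 𝓗 𝓗))
    + Complex.I • Complex.ofRealCLM.comp
      ((innerSL ℝ w.1).comp (ContinuousLinearMap.snd ℝ 𝓗 𝓗)
        - (innerSL ℝ w.2).comp (ContinuousLinearMap.fst ℝ 𝓗 𝓗))

@[simp]
lemma cinnerCLM_apply (w h : 𝓗 × 𝓗) : cinnerCLM w h = cinner h w := by
  simp [cinnerCLM, cinner, real_inner_comm, mul_comm]

omit [InnerProductSpace ℝ 𝓗] in
lemma hnorm_le_sqrt_two_mul_norm (h : 𝓗 × 𝓗) : hnorm h ≤ Real.sqrt 2 * ‖h‖ := by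
  have hsq : ‖h.1‖ ^ 2 + ‖h.2‖ ^ 2 ≤ 2 * ‖h‖ ^ 2 := by
    nlinarith [norm_fst_le h, norm_snd_le h, norm_nonneg h.1, norm_nonneg h.2]
  calc hnorm h ≤ Real.sqrt (2 * ‖h‖ ^ 2) := Real.sqrt_le_sqrt hsq
    _ = Real.sqrt 2 * ‖h‖ := by rw [Real.sqrt_mul zero_le_two, Real.sqrt_sq (norm_nonneg h)]

omit [InnerProductSpace ℝ 𝓗] in
lemma isBigO_hnorm (l : Filter (𝓗 × 𝓗)) : (fun h => hnorm h) =O[l] fun h => h :=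
  .of_bound (Real.sqrt 2) <| .of_forall fun h => by
    simpa [Real.norm_eq_abs, abs_of_nonneg (Real.sqrt_nonneg _), hnorm]
      using hnorm_le_sqrt_two_mul_norm h

lemma hasFDerivAt_cinnerCLM_of_isLittleO {T : 𝓗 × 𝓗 → ℂ} {c w : 𝓗 × 𝓗}
    (hw : (fun h => T (c + h) - T c - cinner h w) =o[𝓝 0] fun h => hnorm h) :
    HasFDerivAt T (cinnerCLM w) c := by
  rw [hasFDerivAt_iff_isLittleO_nhds_zero]
  simpa only [cinnerCLM_apply] using hw.trans_isBigO (isBigO_hnorm _)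

section RealAndImaginaryParts

variable {E : Type*} [NormedAddCommGroup E] [NormedSpace ℝ E] {f : E → ℂ} {f' : E →L[ℝ] ℂ} {x : E}

lemma HasFDerivAt.re (hf : HasFDerivAt f f' x) :
    HasFDerivAt (fun y => (f y).re) (reCLM.comp f') x :=
  reCLM.hasFDerivAt.comp x hf

lemma HasFDerivAt.im (hf : HasFDerivAt f f' x) :
    HasFDerivAt (fun y => (f y).im) (imCLM.comp f') x :=
  imCLM.hasFDerivAt.comp x hf

end RealAndImaginaryParts

theorem frechet_cauchy_riemann_of_complex_differentiable_general
    (T : 𝓗 × 𝓗 → ℂ) (c : 𝓗 × 𝓗)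
    (hT : ∃ w : 𝓗 × 𝓗,
      (fun h : 𝓗 × 𝓗 => T (c + h) - T c - cinner h w) =o[𝓝 (0 : 𝓗 × 𝓗)] fun h => hnorm h) :
    DifferentiableAt ℝ (fun p => (T p).re) c ∧ DifferentiableAt ℝ (fun p => (T p).im) c ∧
    ∃ a₁ a₂ b₁ b₂ : 𝓗,
      (∀ h : 𝓗 × 𝓗,
        fderiv ℝ (fun p => (T p).re) c h = (inner ℝ h.1 a₁ : ℝ) + (inner ℝ h.2 a₂ : ℝ)) ∧
      (∀ h : 𝓗 × 𝓗,
        fderiv ℝ (fun p => (T p).im) c h = (inner ℝ h.1 b₁ : ℝ) + (inner ℝ h.2 b₂ : ℝ)) ∧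
      a₁ = b₂ ∧ a₂ = -b₁ := by
  obtain ⟨w, hw⟩ := hT
  have hre := (hasFDerivAt_cinnerCLM_of_isLittleO hw).re
  have him := (hasFDerivAt_cinnerCLM_of_isLittleO hw).im
  refine ⟨hre.differentiableAt, him.differentiableAt, w.1, w.2, -w.2, w.1,
    fun h => ?_, fun h => ?_, rfl, (neg_neg _).symm⟩
  · rw [hre.fderiv]
    simp
  · rw [him.fderiv]
    simp [inner_neg_right, sub_eq_neg_add]

/-- **Fréchet Cauchy–Riemann conditions (necessity).** Let `T : 𝓗 × 𝓗 → ℂ` with real and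
imaginary parts `T₁, T₂`. If `T` is Fréchet complex differentiable at `c`, i.e. there is a
`w` with `(T (c+h) - T c - ⟨h, w⟩_ℍ) / ‖h‖_ℍ → 0` as `h → 0`, then `T₁` and `T₂` are Fréchet
differentiable at `c`, with partial gradients satisfying `∇₁T₁ c = ∇₂T₂ c` and
`∇₂T₁ c = -∇₁T₂ c`. -/
theorem frechet_cauchy_riemann_of_complex_differentiable [CompleteSpace 𝓗]
    (T : 𝓗 × 𝓗 → ℂ) (c : 𝓗 × 𝓗)
    (hT : ∃ w : 𝓗 × 𝓗,
      (fun h : 𝓗 × 𝓗 => T (c + h) - T c - cinner h w) =o[𝓝 (0 : 𝓗 × 𝓗)] fun h => hnorm h) :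
    DifferentiableAt ℝ (fun p => (T p).re) c ∧ DifferentiableAt ℝ (fun p => (T p).im) c ∧
    ∃ a₁ a₂ b₁ b₂ : 𝓗,
      (∀ h : 𝓗 × 𝓗,
        fderiv ℝ (fun p => (T p).re) c h = (inner ℝ h.1 a₁ : ℝ) + (inner ℝ h.2 a₂ : ℝ)) ∧
      (∀ h : 𝓗 × 𝓗,
        fderiv ℝ (fun p => (T p).im) c h = (inner ℝ h.1 b₁ : ℝ) + (inner ℝ h.2 b₂ : ℝ)) ∧
      a₁ = b₂ ∧ a₂ = -b₁ :=
  frechet_cauchy_riemann_of_complex_differentiable_general T c hT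
end
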